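/- Let r ≤ d be natural numbers and let p₀, …, p_r ∈ ℂ[x] be linearly independent polynomials, each of degree at most d. Let W be the Wronskian of (p₀,…,p_r) and let W̃ be the Wronskian of the reflected family (q₀,…,q_r), where q_j is the reflection of p_j at degree d (i.e. q_j(x) = x^d·p_j(1/x), reversal of the coefficient sequence of p_j padded to degree d). Then deg W + (multiplicity of 0 as a root of W̃) = (r+1)(d−r). (This expresses that the total ramification of a degree-d rational curve in ℙ^r, summed over all points of ℙ¹ including infinity, equals (r+1)(d−r).) -/

import Mathlib

open Polynomial

/-- The Wronskian of a family of `r+1` polynomials: the determinant of the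
`(r+1) × (r+1)` matrix whose `(i,j)` entry is the `i`-th formal derivative of the
`j`-th polynomial. -/
noncomputable def wronskianFam {K : Type*} [CommRing K] {r : ℕ}
    (g : Fin (r + 1) → K[X]) : K[X] :=
  Matrix.det (Matrix.of fun i j : Fin (r + 1) => derivative^[(i : ℕ)] (g j))

/-!
Column operations `p i ↦ p i - c • p j` change neither `W` nor `W̃` (reflection is linear), so
we may assume that the degrees `n j` of the `p j` are distinct. Then `X ^ (0 + 1 + ⋯ + r) * W`
is the determinant of `X ^ i * D^[i] (p j)`; since `X ^ i * D^[i]` multiplies `X ^ k` by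
`k.descFactorial i`, its coefficient of degree `∑ n j` is a nonzero multiple of the Vandermonde
determinant of the `n j`, and nothing of higher degree occurs. Dually, the reflected family has
distinct trailing degrees `d - n j`, and the same computation at the lowest coefficient gives the
order of `W̃` at `0`. Adding the two, `deg W + ord₀ W̃ = (r + 1) * d - r * (r + 1)`.
-/

open Finset Matrix

namespace Polynomial

variable {R : Type*}

theorem coeff_prod_sum_of_natDegree_le [CommSemiring R] {ι : Type*} (s : Finset ι)
    {f : ι → R[X]} {e : ι → ℕ} (h : ∀ i ∈ s, (f i).natDegree ≤ e i) :
    (∏ i ∈ s, f i).coeff (∑ i ∈ s, e i) = ∏ i ∈ s, (f i).coeff (e i) := by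
  induction s using Finset.cons_induction with
  | empty => simp
  | cons a s ha ih =>
    have hs : ∀ i ∈ s, (f i).natDegree ≤ e i := fun i hi => h i (mem_cons_of_mem hi)
    rw [prod_cons, sum_cons, prod_cons,
      coeff_mul_add_eq_of_natDegree_le (h a (mem_cons_self a s))
        ((natDegree_prod_le _ _).trans (sum_le_sum hs)), ih hs]

section CommRing

variable [CommRing R] {n : Type*} [Fintype n] [DecidableEq n] {M : Matrix n n R[X]} {e : n → ℕ}

theorem natDegree_det_le_of_natDegree_le (h : ∀ i j, (M i j).natDegree ≤ e j) :
    M.det.natDegree ≤ ∑ j, e j := by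
  rw [det_apply]
  refine natDegree_sum_le_of_forall_le _ _ fun σ _ => ?_
  exact (natDegree_smul_le _ _).trans ((natDegree_prod_le _ _).trans (sum_le_sum fun j _ => h _ _))

theorem coeff_det_of_natDegree_le (h : ∀ i j, (M i j).natDegree ≤ e j) :
    M.det.coeff (∑ j, e j) = (of fun i j => (M i j).coeff (e j)).det := by
  simp only [det_apply, finsetSum_coeff, coeff_smul, of_apply,
    coeff_prod_sum_of_natDegree_le _ fun j _ => h _ j]

theorem exists_det_eq_X_pow_sum_mul (h : ∀ i j, X ^ e j ∣ M i j) :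
    ∃ c : R[X], M.det = X ^ (∑ j, e j) * c ∧
      c.coeff 0 = (of fun i j => (M i j).coeff (e j)).det := by
  choose N hN using h
  have hM : M = of fun i j => X ^ e j * of N i j := by ext1 i j; exact hN i j
  refine ⟨(of N).det, by rw [hM, det_mul_row, prod_pow_eq_pow_sum], ?_⟩
  rw [coeff_zero_eq_eval_zero, ← coe_evalRingHom, RingHom.map_det]
  congr 1
  ext i j
  simp [hN i j, coeff_X_pow_mul', ← coeff_zero_eq_eval_zero]

end CommRing

variable [Semiring R]

theorem coeff_X_pow_mul_iterate_derivative (f : R[X]) (i k : ℕ) :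
    (X ^ i * derivative^[i] f).coeff k = (k.descFactorial i : R) * f.coeff k := by
  rw [coeff_X_pow_mul']
  split_ifs with h
  · rw [coeff_iterate_derivative, Nat.sub_add_cancel h, nsmul_eq_mul]
  · rw [Nat.descFactorial_eq_zero_iff_lt.mpr (by omega), Nat.cast_zero, zero_mul]

theorem natTrailingDegree_reflect {N : ℕ} {f : R[X]} (hf : f ≠ 0) (hN : f.natDegree ≤ N) :
    (reflect N f).natTrailingDegree = N - f.natDegree := by
  apply le_antisymm
  · apply natTrailingDegree_le_of_ne_zero
    rwa [coeff_reflect, revAt_le (by omega), Nat.sub_sub_self hN, coeff_natDegree, Ne,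
      leadingCoeff_eq_zero]
  · refine le_natTrailingDegree (by rwa [Ne, reflect_eq_zero_iff]) fun k hk => ?_
    rw [coeff_reflect, revAt_le (by omega)]
    exact coeff_eq_zero_of_natDegree_lt (by omega)

variable {F : Type*} [Field F]

noncomputable def reflectLinearMap (N : ℕ) : F[X] →ₗ[F] F[X] where
  toFun := reflect N
  map_add' f g := reflect_add f g N
  map_smul' t f := by simp only [smul_eq_C_mul, reflect_C_mul, RingHom.id_apply]

theorem natDegree_sub_smul_lt {f g : F[X]} (hf : f ≠ 0) (hg : g ≠ 0)
    (hfg : f.natDegree = g.natDegree)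
    (h : f - (f.leadingCoeff / g.leadingCoeff) • g ≠ 0) :
    (f - (f.leadingCoeff / g.leadingCoeff) • g).natDegree < f.natDegree := by
  have hc : f.leadingCoeff / g.leadingCoeff ≠ 0 :=
    div_ne_zero (leadingCoeff_ne_zero.2 hf) (leadingCoeff_ne_zero.2 hg)
  rw [smul_eq_C_mul] at h ⊢
  refine natDegree_lt_natDegree h (degree_sub_lt_left ?_ hf ?_)
  · rw [degree_C_mul hc, degree_eq_natDegree hf, degree_eq_natDegree hg, hfg]
  · rw [leadingCoeff_mul, leadingCoeff_C, div_mul_cancel₀ _ (leadingCoeff_ne_zero.2 hg)]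

end Polynomial

section Wronskian

variable {K : Type*} [CommRing K] {r : ℕ}

theorem X_pow_sum_mul_wronskianFam (g : Fin (r + 1) → K[X]) :
    X ^ (∑ i : Fin (r + 1), (i : ℕ)) * wronskianFam g =
      (of fun i j : Fin (r + 1) => X ^ (i : ℕ) * derivative^[i] (g j)).det := by
  rw [wronskianFam, ← prod_pow_eq_pow_sum, ← det_mul_column]
  rfl

theorem wronskianFam_update_sub_smul (g : Fin (r + 1) → K[X]) {i j : Fin (r + 1)}
    (hij : i ≠ j) (t : K) :
    wronskianFam (Function.update g i (g i - t • g j)) = wronskianFam g := by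
  rw [wronskianFam, wronskianFam, ← det_updateCol_add_smul_self
    (of fun a k : Fin (r + 1) => derivative^[(a : ℕ)] (g k)) hij (-C t)]
  congr 1
  ext1 a k
  rcases eq_or_ne k i with rfl | hk
  · simp [smul_eq_C_mul, sub_eq_add_neg]
  · simp [hk]

theorem exists_injective_natDegree_wronskianFam_comp_eq {F : Type*} [Field F] {d : ℕ}
    {p : Fin (r + 1) → F[X]} (hp : LinearIndependent F p) (hd : ∀ j, (p j).natDegree ≤ d) :
    ∃ q : Fin (r + 1) → F[X], LinearIndependent F q ∧ (∀ j, (q j).natDegree ≤ d) ∧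
      Function.Injective (fun j => (q j).natDegree) ∧
      ∀ L : F[X] →ₗ[F] F[X], wronskianFam (L ∘ q) = wronskianFam (L ∘ p) := by
  induction hN : ∑ j, (p j).natDegree using Nat.strong_induction_on generalizing p with
  | _ N ih =>
    by_cases hinj : Function.Injective fun j => (p j).natDegree
    · exact ⟨p, hp, hd, hinj, fun _ => rfl⟩
    obtain ⟨i, j, hdeg, hij⟩ := Function.not_injective_iff.1 hinj
    set c := (p i).leadingCoeff / (p j).leadingCoeff
    set p' := Function.update p i (p i - c • p j)
    have hp' : LinearIndependent F p' :=
      hp.update i _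
        ⟨1, one_mem _, Finsupp.single i 1 - Finsupp.single j c, by simp [hij], by simp⟩
    have hlt : (p' i).natDegree < (p i).natDegree := by
      simpa [p'] using natDegree_sub_smul_lt (hp.ne_zero i) (hp.ne_zero j) hdeg
        (by simpa [p'] using hp'.ne_zero i)
    have hle : ∀ k, (p' k).natDegree ≤ (p k).natDegree := fun k => by
      rcases eq_or_ne k i with rfl | hk
      · exact hlt.le
      · simp [p', hk]
    have hsum : ∑ k, (p' k).natDegree < N :=
      hN ▸ sum_lt_sum (fun k _ => hle k) ⟨i, mem_univ i, hlt⟩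
    obtain ⟨q, hq, hqd, hqinj, hW⟩ := ih _ hsum hp' (fun k => (hle k).trans (hd k)) rfl
    refine ⟨q, hq, hqd, hqinj, fun L => (hW L).trans ?_⟩
    rw [Function.comp_update, map_sub, map_smul]
    exact wronskianFam_update_sub_smul _ hij c

variable [IsDomain K] [CharZero K]

theorem det_descFactorial_mul_ne_zero {n : ℕ} {e : Fin n → ℕ}
    (he : Function.Injective e) {c : Fin n → K} (hc : ∀ j, c j ≠ 0) :
    (of fun i j : Fin n => ((e j).descFactorial i : K) * c j).det ≠ 0 := by
  have hV : (vandermonde fun j => (e j : K)).det =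
      (of fun i j : Fin n => ((e j).descFactorial i : K)).det := by
    rw [det_eval_matrixOfPolynomials_eq_det_vandermonde _ (fun i => descPochhammer K i)
      (fun i => descPochhammer_natDegree _ _) (fun i => monic_descPochhammer _ _),
      ← det_transpose]
    congr 1
    ext i j
    simp [descPochhammer_eval_eq_descFactorial]
  rw [show (of fun i j : Fin n => ((e j).descFactorial i : K) * c j) =
      of fun i j => c j * of (fun i j : Fin n => ((e j).descFactorial i : K)) i j from
    ext fun i j => mul_comm _ _, det_mul_row, ← hV]
  exact mul_ne_zero (prod_ne_zero_iff.2 fun j _ => hc j)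
    (det_vandermonde_ne_zero_iff.2 fun a b hab => he (Nat.cast_injective hab))

theorem natDegree_wronskianFam_add_sum {g : Fin (r + 1) → K[X]} (h0 : ∀ j, g j ≠ 0)
    (hinj : Function.Injective fun j => (g j).natDegree) :
    (wronskianFam g).natDegree + ∑ i : Fin (r + 1), (i : ℕ) = ∑ j, (g j).natDegree := by
  set M := of fun i j : Fin (r + 1) => X ^ (i : ℕ) * derivative^[i] (g j)
  have hle : ∀ i j, (M i j).natDegree ≤ (g j).natDegree := fun i j =>
    natDegree_le_iff_coeff_eq_zero.2 fun k hk => by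
      simp only [M, of_apply, coeff_X_pow_mul_iterate_derivative, coeff_eq_zero_of_natDegree_lt hk,
        mul_zero]
  have hcoeff : M.det.coeff (∑ j, (g j).natDegree) ≠ 0 := by
    simpa only [coeff_det_of_natDegree_le hle, M, of_apply, coeff_X_pow_mul_iterate_derivative,
      coeff_natDegree]
      using det_descFactorial_mul_ne_zero hinj fun j => leadingCoeff_ne_zero.2 (h0 j)
  rw [← X_pow_sum_mul_wronskianFam] at hcoeff
  have hW : wronskianFam g ≠ 0 := by rintro h; simp [h] at hcoeff
  rw [← natDegree_X_pow_mul _ hW]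
  refine natDegree_eq_of_le_of_coeff_ne_zero ?_ hcoeff
  rw [X_pow_sum_mul_wronskianFam]
  exact natDegree_det_le_of_natDegree_le hle

theorem natTrailingDegree_wronskianFam_add_sum {g : Fin (r + 1) → K[X]} (h0 : ∀ j, g j ≠ 0)
    (hinj : Function.Injective fun j => (g j).natTrailingDegree) :
    (wronskianFam g).natTrailingDegree + ∑ i : Fin (r + 1), (i : ℕ) =
      ∑ j, (g j).natTrailingDegree := by
  set M := of fun i j : Fin (r + 1) => X ^ (i : ℕ) * derivative^[i] (g j)
  have hdvd : ∀ i j, X ^ (g j).natTrailingDegree ∣ M i j := fun i j =>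
    X_pow_dvd_iff.2 fun k hk => by
      simp only [M, of_apply, coeff_X_pow_mul_iterate_derivative,
        coeff_eq_zero_of_lt_natTrailingDegree hk, mul_zero]
  obtain ⟨c, hc, hc0⟩ := exists_det_eq_X_pow_sum_mul hdvd
  replace hc0 : c.coeff 0 ≠ 0 := by
    simpa only [hc0, M, of_apply, coeff_X_pow_mul_iterate_derivative, trailingCoeff]
      using det_descFactorial_mul_ne_zero hinj fun j => trailingCoeff_nonzero_iff_nonzero.2 (h0 j)
  have hc_ne : c ≠ 0 := by rintro rfl; exact hc0 (coeff_zero 0)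
  rw [← X_pow_sum_mul_wronskianFam] at hc
  have hW : wronskianFam g ≠ 0 := by
    intro h
    simp [h, hc_ne] at hc
  have := congrArg natTrailingDegree hc
  rwa [mul_comm, natTrailingDegree_mul_X_pow hW, mul_comm, natTrailingDegree_mul_X_pow hc_ne,
    natTrailingDegree_eq_zero.2 (.inr hc0), zero_add] at this

theorem natDegree_wronskianFam_add_natTrailingDegree_reflect {d : ℕ}
    {q : Fin (r + 1) → K[X]} (h0 : ∀ j, q j ≠ 0) (hd : ∀ j, (q j).natDegree ≤ d)
    (hinj : Function.Injective fun j => (q j).natDegree) :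
    (wronskianFam q).natDegree + (wronskianFam fun j => (q j).reflect d).natTrailingDegree =
      (r + 1) * (d - r) := by
  have htd : ∀ j, (reflect d (q j)).natTrailingDegree = d - (q j).natDegree := fun j =>
    natTrailingDegree_reflect (h0 j) (hd j)
  have hdeg := natDegree_wronskianFam_add_sum h0 hinj
  have htrail := natTrailingDegree_wronskianFam_add_sum (g := fun j => reflect d (q j))
    (fun j => by rw [Ne, reflect_eq_zero_iff]; exact h0 j)
    fun a b hab => hinj <| by
      simp only [htd] at hab
      have := hd a
      have := hd b
      show (q a).natDegree = (q b).natDegree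
      omega
  simp only [htd] at htrail
  have hsum : ∑ j, (q j).natDegree + ∑ j, (d - (q j).natDegree) = (r + 1) * d := by
    rw [← sum_add_distrib]
    simp [Nat.add_sub_cancel' (hd _)]
  have hgauss : (∑ i : Fin (r + 1), (i : ℕ)) * 2 = (r + 1) * r := by
    rw [Fin.sum_univ_eq_sum_range (fun i => i), sum_range_id_mul_two, Nat.add_sub_cancel]
  rw [Nat.mul_sub]
  omega

end Wronskian

theorem wronskian_natDegree_add_reflect_rootMultiplicity_general (r d : ℕ)
    (p : Fin (r + 1) → Polynomial ℂ)
    (hind : LinearIndependent ℂ p)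
    (hdeg : ∀ j, (p j).natDegree ≤ d) :
    (wronskianFam p).natDegree +
      rootMultiplicity 0 (wronskianFam fun j => (p j).reflect d) =
      (r + 1) * (d - r) := by
  obtain ⟨q, hq, hqd, hinj, hW⟩ := exists_injective_natDegree_wronskianFam_comp_eq hind hdeg
  have hW₁ : wronskianFam q = wronskianFam p := hW LinearMap.id
  have hW₂ : (wronskianFam fun j => (q j).reflect d) = wronskianFam fun j => (p j).reflect d :=
    hW (reflectLinearMap d)
  rw [rootMultiplicity_eq_natTrailingDegree', ← hW₁, ← hW₂]
  exact natDegree_wronskianFam_add_natTrailingDegree_reflect hq.ne_zero hqd hinj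

/-- Let `p₀, …, p_r` be linearly independent complex polynomials of degree at most `d`,
`W` their Wronskian, and `W̃` the Wronskian of the family of reflections of the `p_j` at
degree `d` (coefficient reversal padded to degree `d`).  Then
`deg W + (multiplicity of 0 as a root of W̃) = (r+1)(d−r)`:  the total ramification of a
degree-`d` rational curve in `ℙ^r`, including at infinity, is `(r+1)(d−r)`. -/
theorem wronskian_natDegree_add_reflect_rootMultiplicity (r d : ℕ) (hrd : r ≤ d)
    (p : Fin (r + 1) → Polynomial ℂ)
    (hind : LinearIndependent ℂ p)
    (hdeg : ∀ j, (p j).natDegree ≤ d) :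
    (wronskianFam p).natDegree +
      rootMultiplicity 0 (wronskianFam fun j => (p j).reflect d) =
      (r + 1) * (d - r) :=
  wronskian_natDegree_add_reflect_rootMultiplicity_general r d p hind hdeg
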